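/- arXiv:2502.04062 — 2 statements merged into one kernel-verified Lean document; each statement's English description precedes it below -/
import Mathlib

section
/- If a bounded, continuously differentiable signal w : ℝ≥0 → ℝ^d (with bounded derivative) is not persistently exciting, then for every T > 0 and every ε > 0 there exist a time t > 0 and a unit vector z ∈ ℝ^d such that |zᵀ w(τ)| ≤ ε for all τ ∈ [t, t+T]. -/
open Matrix

noncomputable def gramInt {ι : Type} (w : ℝ → ι → ℝ) (t T : ℝ) : Matrix ι ι ℝ :=
  Matrix.of fun i j => ∫ τ in t..(t + T), w τ i * w τ j

def IsPECT {ι : Type} [Fintype ι] [DecidableEq ι] (w : ℝ → ι → ℝ) : Prop :=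
  ∃ α : ℝ, 0 < α ∧ ∃ T : ℝ, 0 < T ∧ ∀ t : ℝ, 0 ≤ t → (gramInt w t T - α • 1).PosSemidef

/-! If persistent excitation fails, then for every level `α` and window length there are a window
`[t, t + T + 1]` and a unit vector `z` with `∫ ⟪z, w⟫² < α` over it: a vector on which the
quadratic form of `gramInt w t (T + 1) - α • 1` is negative, normalised. Since `ẇ` is bounded by
some `K`, the scalar signal `⟪z, w⟫` is `K`-Lipschitz, so if it exceeded `ε` somewhere in the window
it would stay above `ε / 2` on a sub-window of length `L ≈ ε / 2K`, forcing `∫ ⟪z, w⟫² ≥ (ε/2)² L`.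
The choice `α = (ε/2)² L` rules this out. -/

open Set

lemma gramInt_isHermitian {ι : Type} (w : ℝ → ι → ℝ) (t T : ℝ) :
    (gramInt w t T).IsHermitian := by
  ext i j
  exact intervalIntegral.integral_congr fun τ _ => mul_comm _ _

lemma dotProduct_gramInt_mulVec {ι : Type} [Fintype ι] {w : ℝ → ι → ℝ} (hw : Continuous w)
    (t T : ℝ) (x : ι → ℝ) :
    x ⬝ᵥ gramInt w t T *ᵥ x = ∫ τ in t..(t + T), (x ⬝ᵥ w τ) ^ 2 := by
  set g : ι → ι → ℝ → ℝ := fun i j τ => x i * x j * (w τ i * w τ j)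
  have hg : ∀ i j, IntervalIntegrable (g i j) MeasureTheory.volume t (t + T) :=
    fun i j => (by fun_prop : Continuous (g i j)).intervalIntegrable _ _
  calc x ⬝ᵥ gramInt w t T *ᵥ x
      = ∑ i, ∑ j, ∫ τ in t..(t + T), g i j τ := by
        simp only [g, dotProduct, mulVec, gramInt, of_apply, Finset.mul_sum,
          intervalIntegral.integral_const_mul]
        exact Finset.sum_congr rfl fun i _ => Finset.sum_congr rfl fun j _ => by ring
    _ = ∫ τ in t..(t + T), ∑ i, ∑ j, g i j τ := by
        rw [intervalIntegral.integral_finsetSum (f := fun i τ => ∑ j, g i j τ)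
          fun i _ => (by fun_prop : Continuous fun τ => ∑ j, g i j τ).intervalIntegrable _ _]
        simp only [intervalIntegral.integral_finsetSum fun j _ => hg _ j]
    _ = ∫ τ in t..(t + T), (x ⬝ᵥ w τ) ^ 2 := by
        refine intervalIntegral.integral_congr fun τ _ => ?_
        simp only [g, dotProduct, sq, Finset.sum_mul_sum]
        exact Finset.sum_congr rfl fun i _ => Finset.sum_congr rfl fun j _ => by ring

lemma exists_integral_inner_sq_lt_of_not_isPECT {ι : Type} [Fintype ι] [DecidableEq ι]
    {w : ℝ → EuclideanSpace ℝ ι} (hw : Continuous w) (hnPE : ¬ IsPECT fun s => (w s : ι → ℝ))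
    {α : ℝ} (hα : 0 < α) {T : ℝ} (hT : 0 < T) :
    ∃ t, 0 ≤ t ∧ ∃ z : EuclideanSpace ℝ ι, ‖z‖ = 1 ∧
      ∫ τ in t..(t + T), inner ℝ z (w τ) ^ 2 < α := by
  simp only [IsPECT, not_exists, not_and, not_forall] at hnPE
  obtain ⟨t, ht, hnotPSD⟩ := hnPE α hα T hT
  have hherm := (gramInt_isHermitian (fun s => (w s : ι → ℝ)) t T).sub
    ((isHermitian_one (n := ι) (α := ℝ)).smul (IsSelfAdjoint.all α))
  simp only [posSemidef_iff_dotProduct_mulVec, hherm, true_and, not_forall, not_le] at hnotPSD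
  obtain ⟨x, hx⟩ := hnotPSD
  set v : EuclideanSpace ℝ ι := WithLp.toLp 2 x
  have hinner : ∀ τ, inner ℝ v (w τ) = x ⬝ᵥ w τ := fun τ => by
    rw [EuclideanSpace.inner_eq_star_dotProduct, dotProduct_comm]; rfl
  have hnorm : ‖v‖ ^ 2 = x ⬝ᵥ x := by
    rw [← real_inner_self_eq_norm_sq, EuclideanSpace.inner_eq_star_dotProduct]; rfl
  have hlt : ∫ τ in t..(t + T), inner ℝ v (w τ) ^ 2 < α * ‖v‖ ^ 2 := by
    rw [star_trivial, sub_mulVec, dotProduct_sub, sub_neg,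
      dotProduct_gramInt_mulVec (w := fun s => (w s : ι → ℝ)) (by fun_prop), smul_mulVec,
      one_mulVec, dotProduct_smul, smul_eq_mul] at hx
    simpa only [hinner, hnorm] using hx
  have hv : v ≠ 0 := by
    have hint : 0 ≤ ∫ τ in t..(t + T), inner ℝ v (w τ) ^ 2 :=
      intervalIntegral.integral_nonneg (by linarith) fun τ _ => sq_nonneg _
    have : 0 < ‖v‖ ^ 2 := pos_of_mul_pos_right (hint.trans_lt hlt) hα.le
    exact fun h => by simp [h] at this
  refine ⟨t, ht, ‖v‖⁻¹ • v, norm_smul_inv_norm hv, ?_⟩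
  calc ∫ τ in t..(t + T), inner ℝ (‖v‖⁻¹ • v) (w τ) ^ 2
      = (‖v‖ ^ 2)⁻¹ * ∫ τ in t..(t + T), inner ℝ v (w τ) ^ 2 := by
        simp only [real_inner_smul_left, mul_pow, inv_pow, intervalIntegral.integral_const_mul]
    _ < (‖v‖ ^ 2)⁻¹ * (α * ‖v‖ ^ 2) := by gcongr
    _ = α := by field_simp

lemma abs_inner_sub_le_of_norm_deriv_le {E : Type*} [NormedAddCommGroup E] [InnerProductSpace ℝ E]
    {w : ℝ → E} {s : Set ℝ} {C : ℝ} (hw : Differentiable ℝ w) (hC : ∀ u ∈ s, ‖deriv w u‖ ≤ C)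
    (hs : Convex ℝ s) (z : E) {x y : ℝ} (hx : x ∈ s) (hy : y ∈ s) :
    |inner ℝ z (w x) - inner ℝ z (w y)| ≤ ‖z‖ * (C * |x - y|) := by
  rw [← inner_sub_right]
  exact (abs_real_inner_le_norm _ _).trans <| mul_le_mul_of_nonneg_left
    (hs.norm_image_sub_le_of_norm_deriv_le (fun u _ => hw u) hC hy hx) (norm_nonneg z)

lemma sq_mul_le_integral_sq {f : ℝ → ℝ} (hf : Continuous f) {a b τ₀ K L c : ℝ}
    (hτ₀ : τ₀ ∈ Icc a b) (hK : 0 ≤ K) (hL : 0 ≤ L) (hLab : L ≤ b - a) (hc : 0 ≤ c)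
    (hcf : c + K * L ≤ |f τ₀|) (hlip : ∀ x ∈ Icc a b, |f x - f τ₀| ≤ K * |x - τ₀|) :
    c ^ 2 * L ≤ ∫ x in a..b, f x ^ 2 := by
  set s := min τ₀ (b - L)
  have hs : a ≤ s ∧ s ≤ τ₀ ∧ τ₀ - L ≤ s ∧ s ≤ b - L := by
    refine ⟨le_min hτ₀.1 (by linarith), min_le_left _ _, le_min (by linarith) ?_, min_le_right _ _⟩
    linarith [hτ₀.2]
  have hlow : ∀ x ∈ Icc s (s + L), c ^ 2 ≤ f x ^ 2 := by
    intro x hx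
    have hdist : |x - τ₀| ≤ L := abs_le.2 ⟨by linarith [hx.1], by linarith [hx.2]⟩
    have hfx : |f x - f τ₀| ≤ K * L :=
      (hlip x ⟨by linarith [hx.1], by linarith [hx.2]⟩).trans (mul_le_mul_of_nonneg_left hdist hK)
    have : c ≤ |f x| := by linarith [abs_sub_abs_le_abs_sub (f τ₀) (f x), abs_sub_comm (f x) (f τ₀)]
    simpa only [sq_abs] using pow_le_pow_left₀ hc this 2
  calc c ^ 2 * L = ∫ _ in s..(s + L), c ^ 2 := by simp [mul_comm]
    _ ≤ ∫ x in s..(s + L), f x ^ 2 :=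
      intervalIntegral.integral_mono_on (by linarith) intervalIntegrable_const
        ((hf.pow 2).intervalIntegrable _ _) hlow
    _ ≤ ∫ x in a..b, f x ^ 2 :=
      intervalIntegral.integral_mono_interval hs.1 (by linarith) (by linarith)
        (Filter.Eventually.of_forall fun _ => sq_nonneg _) ((hf.pow 2).intervalIntegrable _ _)

theorem not_pe_small_direction_general {d : ℕ} (w : ℝ → EuclideanSpace ℝ (Fin d))
    (hsmooth : ContDiff ℝ 1 w)
    (hbdd' : ∃ M' : ℝ, ∀ t : ℝ, 0 ≤ t → ‖deriv w t‖ ≤ M')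
    (hnPE : ¬ IsPECT (fun s => (w s : Fin d → ℝ))) :
    ∀ T : ℝ, 0 < T → ∀ ε : ℝ, 0 < ε →
      ∃ t : ℝ, 0 < t ∧ ∃ z : EuclideanSpace ℝ (Fin d), ‖z‖ = 1 ∧
        ∀ τ ∈ Set.Icc t (t + T), |(inner ℝ z (w τ) : ℝ)| ≤ ε := by
  intro T hT ε hε
  obtain ⟨M', hM'⟩ := hbdd'
  set K := max M' 1
  have hK : 0 < K := lt_max_of_lt_right one_pos
  set L := min (ε / (2 * K)) (T + 1)
  have hL : 0 < L := lt_min (by positivity) (by linarith)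
  have hKL : K * L ≤ ε / 2 := by
    calc K * L ≤ K * (ε / (2 * K)) := by gcongr; exact min_le_left _ _
      _ = ε / 2 := by field_simp
  obtain ⟨t, ht, z, hz, hsmall⟩ := exists_integral_inner_sq_lt_of_not_isPECT hsmooth.continuous
    hnPE (α := (ε / 2) ^ 2 * L) (by positivity) (T := T + 1) (by linarith)
  refine ⟨t + 1, by linarith, z, hz, fun τ hτ => ?_⟩
  by_contra! hbig
  have hlip : ∀ x ∈ Icc t (t + (T + 1)), |inner ℝ z (w x) - inner ℝ z (w τ)| ≤ K * |x - τ| :=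
    fun x hx => by
      simpa [hz] using abs_inner_sub_le_of_norm_deriv_le (hsmooth.differentiable one_ne_zero)
        (fun u hu => (hM' u hu).trans (le_max_left M' 1)) (convex_Ici 0) z
        (mem_Ici.2 (by linarith [hx.1])) (mem_Ici.2 (by linarith [hτ.1]))
  have hlarge := sq_mul_le_integral_sq (c := ε / 2) (by fun_prop)
    ⟨by linarith [hτ.1], by linarith [hτ.2]⟩ hK.le hL.le (min_le_right _ _ |>.trans (by linarith))
    (by positivity) (by linarith) hlip
  linarith

/-- if a bounded `C¹` signal with bounded derivative is not persistently
exciting, then along some fixed unit direction it is uniformly `ε`-small on arbitrarily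
long time intervals. -/
theorem not_pe_small_direction {d : ℕ} (w : ℝ → EuclideanSpace ℝ (Fin d))
    (hsmooth : ContDiff ℝ 1 w)
    (hbdd : ∃ M : ℝ, ∀ t : ℝ, 0 ≤ t → ‖w t‖ ≤ M)
    (hbdd' : ∃ M' : ℝ, ∀ t : ℝ, 0 ≤ t → ‖deriv w t‖ ≤ M')
    (hnPE : ¬ IsPECT (fun s => (w s : Fin d → ℝ))) :
    ∀ T : ℝ, 0 < T → ∀ ε : ℝ, 0 < ε →
      ∃ t : ℝ, 0 < t ∧ ∃ z : EuclideanSpace ℝ (Fin d), ‖z‖ = 1 ∧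
        ∀ τ ∈ Set.Icc t (t + T), |(inner ℝ z (w τ) : ℝ)| ≤ ε :=
  not_pe_small_direction_general w hsmooth hbdd' hnPE
end

section
/- Sufficient condition for PE state trajectories in discrete-time LTI systems: let x_{t+1} = A x_t + B u_t with A ∈ ℝ^{n×n} Schur and (A,B) reachable, u : ℕ → ℝ^m bounded, x_0 ∈ ℝ^n arbitrary. If the stacked shift signal Q^n(u)_t = (u_{t−n+1}, …, u_t) ∈ ℝ^{nm} is persistently exciting, then the state trajectory x is persistently exciting in ℝ^n. -/
open Matrix

noncomputable def gramSum {ι : Type} [Fintype ι] (w : ℕ → ι → ℝ) (t T : ℕ) :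
    Matrix ι ι ℝ :=
  ∑ τ ∈ Finset.Icc t (t + T), Matrix.vecMulVec (w τ) (w τ)

/-- Persistency of excitation of a discrete-time signal. -/
def IsPE {ι : Type} [Fintype ι] [DecidableEq ι] (w : ℕ → ι → ℝ) : Prop :=
  ∃ α : ℝ, 0 < α ∧ ∃ T : ℕ, 0 < T ∧ ∀ t : ℕ, (gramSum w t T - α • 1).PosSemidef

/-- Partial persistency of excitation of degree `D'`: some surjective linear map
makes the signal persistently exciting. -/
def IsPPE {ι : Type} [Fintype ι] [DecidableEq ι] (w : ℕ → ι → ℝ) (D' : ℕ) : Prop :=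
  ∃ P : (ι → ℝ) →ₗ[ℝ] (Fin D' → ℝ), Function.Surjective P ∧ IsPE (fun t => P (w t))

/-- The multi-shift stack `Q^k(w)_t = (w_{t-k+1}, …, w_t)` with zero padding. -/
def Qstack (k : ℕ) {d : ℕ} (w : ℕ → Fin d → ℝ) : ℕ → Fin k × Fin d → ℝ :=
  fun t p => if k - 1 - (p.1 : ℕ) ≤ t then w (t - (k - 1 - (p.1 : ℕ))) p.2 else 0

/-- `A` is Schur: all complex eigenvalues lie strictly inside the unit disc. -/
def IsSchur {n : ℕ} (A : Matrix (Fin n) (Fin n) ℝ) : Prop :=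
  ∀ μ : ℂ, μ ∈ spectrum ℂ (A.map (algebraMap ℝ ℂ)) → ‖μ‖ < 1

/-- Reachability of the pair `(A, B)`: the controllability matrix has full row rank. -/
def IsReachable {n m : ℕ} (A : Matrix (Fin n) (Fin n) ℝ)
    (B : Matrix (Fin n) (Fin m) ℝ) : Prop :=
  (Matrix.of fun (i : Fin n) (p : Fin n × Fin m) =>
    ((A ^ (p.1 : ℕ)) * B) i p.2).rank = n

/-!
Let `c_k` be the coefficients of the characteristic polynomial of `A`. By Cayley–Hamilton the
filtered state `∑_{k ≤ n} c_k x_{t+k}` does not depend on `x_t`: it equals `K Q^n(u)_{t+n-1}` for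
the block row `K = [G_0, …, G_{n-1}]`, `G_s = ∑_{k > s} c_k A^{k-1-s} B`. Since `c_n = 1`, `K` is
block unit-triangular over the reachability matrix, so it has full row rank. A full-row-rank image
of a PE signal is PE, hence so is the filtered state, and by Cauchy–Schwarz a signal whose
finite-impulse-response filtering is PE is itself PE (with the window lengthened by `n`).
-/

open Finset

lemma sum_sq_sum_mul_shift_le (c f : ℕ → ℝ) (N T : ℕ) :
    ∑ σ ∈ range (T + 1), (∑ k ∈ range (N + 1), c k * f (σ + k)) ^ 2 ≤
      (∑ k ∈ range (N + 1), c k ^ 2) * ((N + 1) * ∑ j ∈ range (T + N + 1), f j ^ 2) := by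
  have hwindow : ∀ k ∈ range (N + 1),
      ∑ σ ∈ range (T + 1), f (σ + k) ^ 2 ≤ ∑ j ∈ range (T + N + 1), f j ^ 2 := by
    intro k hk
    rw [range_eq_Ico, sum_Ico_add' (fun j => f j ^ 2), range_eq_Ico]
    refine sum_le_sum_of_subset_of_nonneg ?_ fun j _ _ => sq_nonneg _
    intro j
    simp only [mem_Ico, mem_range] at hk ⊢
    omega
  calc ∑ σ ∈ range (T + 1), (∑ k ∈ range (N + 1), c k * f (σ + k)) ^ 2
      ≤ ∑ σ ∈ range (T + 1), (∑ k ∈ range (N + 1), c k ^ 2) *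
          ∑ k ∈ range (N + 1), f (σ + k) ^ 2 :=
        sum_le_sum fun σ _ => sum_mul_sq_le_sq_mul_sq _ _ _
    _ = (∑ k ∈ range (N + 1), c k ^ 2) *
          ∑ k ∈ range (N + 1), ∑ σ ∈ range (T + 1), f (σ + k) ^ 2 := by
        rw [← mul_sum, sum_comm]
    _ ≤ (∑ k ∈ range (N + 1), c k ^ 2) *
          ∑ k ∈ range (N + 1), ∑ j ∈ range (T + N + 1), f j ^ 2 := by
        gcongr with k hk
        exact hwindow k hk
    _ = _ := by
        rw [sum_const, card_range, nsmul_eq_mul]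
        push_cast
        ring

section PersistentExcitation

variable {ι κ : Type} [Fintype ι] [Fintype κ]

lemma dotProduct_gramSum_mulVec (w : ℕ → ι → ℝ) (t T : ℕ) (y : ι → ℝ) :
    y ⬝ᵥ gramSum w t T *ᵥ y = ∑ i ∈ range (T + 1), (w (t + i) ⬝ᵥ y) ^ 2 := by
  rw [gramSum, ← Ico_add_one_right_eq_Icc, sum_Ico_eq_sum_range, add_assoc,
    Nat.add_sub_cancel_left, sum_mulVec, dotProduct_sum]
  refine sum_congr rfl fun i _ => ?_
  rw [vecMulVec_mulVec, op_smul_eq_smul, dotProduct_smul, smul_eq_mul, dotProduct_comm y, sq]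

lemma dotProduct_self_eq_norm_toLp_sq (z : ι → ℝ) : z ⬝ᵥ z = ‖WithLp.toLp 2 z‖ ^ 2 := by
  rw [← real_inner_self_eq_norm_sq, EuclideanSpace.inner_toLp_toLp, star_trivial]

lemma exists_pos_mul_dotProduct_self_le (K : Matrix ι κ ℝ)
    (hK : Function.Injective fun y => y ᵥ* K) :
    ∃ c : ℝ, 0 < c ∧ ∀ y, c * (y ⬝ᵥ y) ≤ (y ᵥ* K) ⬝ᵥ (y ᵥ* K) := by
  classical
  have hf : ∀ y, toEuclideanLin Kᵀ (WithLp.toLp 2 y) = WithLp.toLp 2 (y ᵥ* K) := fun y => by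
    simp [toEuclideanLin, toLpLin_apply, mulVec_transpose]
  have hinj : Function.Injective (toEuclideanLin Kᵀ) := fun a b hab => by
    rw [← WithLp.toLp_ofLp 2 a, ← WithLp.toLp_ofLp 2 b, hf, hf] at hab
    exact WithLp.ofLp_injective 2 (hK (WithLp.toLp_injective 2 hab))
  obtain ⟨L, hL, hanti⟩ :=
    (toEuclideanLin Kᵀ).exists_antilipschitzWith (LinearMap.ker_eq_bot.2 hinj)
  refine ⟨((L : ℝ) ^ 2)⁻¹, by positivity, fun y => ?_⟩
  have hle : ‖WithLp.toLp 2 y‖ ≤ L * ‖WithLp.toLp 2 (y ᵥ* K)‖ := by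
    simpa [hf] using hanti.le_mul_norm_sub 0 (WithLp.toLp 2 y)
  rw [dotProduct_self_eq_norm_toLp_sq, dotProduct_self_eq_norm_toLp_sq,
    inv_mul_le_iff₀ (by positivity), ← mul_pow]
  gcongr

variable [DecidableEq ι] [DecidableEq κ]

lemma isPE_iff (w : ℕ → ι → ℝ) :
    IsPE w ↔ ∃ α : ℝ, 0 < α ∧ ∃ T : ℕ, 0 < T ∧
      ∀ t (y : ι → ℝ), α * (y ⬝ᵥ y) ≤ ∑ i ∈ range (T + 1), (w (t + i) ⬝ᵥ y) ^ 2 := by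
  have hHerm : ∀ t T (α : ℝ), (gramSum w t T - α • 1).IsHermitian := fun t T α =>
    (posSemidef_sum _ fun τ _ => posSemidef_vecMulVec_self_star (w τ)).isHermitian.sub
      (isHermitian_one.smul rfl)
  have hquad : ∀ t T (α : ℝ) (y : ι → ℝ),
      0 ≤ y ⬝ᵥ (gramSum w t T - α • 1) *ᵥ y ↔
        α * (y ⬝ᵥ y) ≤ ∑ i ∈ range (T + 1), (w (t + i) ⬝ᵥ y) ^ 2 := by
    intro t T α y
    rw [sub_mulVec, smul_mulVec, one_mulVec, dotProduct_sub, dotProduct_smul, smul_eq_mul,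
      dotProduct_gramSum_mulVec, sub_nonneg]
  simp only [IsPE, posSemidef_iff_dotProduct_mulVec, star_trivial, hHerm, true_and, hquad]

lemma IsPE.comp_add {w : ℕ → ι → ℝ} (hw : IsPE w) (d : ℕ) : IsPE fun t => w (t + d) := by
  obtain ⟨α, hα, T, hT, hw⟩ := (isPE_iff w).1 hw
  refine (isPE_iff _).2 ⟨α, hα, T, hT, fun t y => ?_⟩
  simpa only [add_right_comm] using hw (t + d) y

lemma IsPE.mulVec {w : ℕ → κ → ℝ} (hw : IsPE w) (K : Matrix ι κ ℝ)
    (hK : Function.Injective fun y => y ᵥ* K) : IsPE fun t => K *ᵥ w t := by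
  obtain ⟨α, hα, T, hT, hw⟩ := (isPE_iff w).1 hw
  obtain ⟨c, hc, hK⟩ := exists_pos_mul_dotProduct_self_le K hK
  refine (isPE_iff _).2 ⟨α * c, mul_pos hα hc, T, hT, fun t y => ?_⟩
  simp only [dotProduct_comm (K *ᵥ _), dotProduct_mulVec, dotProduct_comm (y ᵥ* K)]
  calc α * c * (y ⬝ᵥ y) = α * (c * (y ⬝ᵥ y)) := mul_assoc _ _ _
    _ ≤ α * ((y ᵥ* K) ⬝ᵥ (y ᵥ* K)) := by gcongr; exact hK y
    _ ≤ _ := hw t (y ᵥ* K)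

lemma IsPE.of_fir {x : ℕ → ι → ℝ} (c : ℕ → ℝ) (N : ℕ)
    (h : IsPE fun t => ∑ k ∈ range (N + 1), c k • x (t + k)) : IsPE x := by
  obtain ⟨α, hα, T, hT, h⟩ := (isPE_iff _).1 h
  set C : ℝ := (∑ k ∈ range (N + 1), c k ^ 2 + 1) * (N + 1)
  have hC : 0 < C := by positivity
  refine (isPE_iff x).2 ⟨α / C, div_pos hα hC, T + N, by omega, fun t y => ?_⟩
  have hbound := sum_sq_sum_mul_shift_le c (fun j => x (t + j) ⬝ᵥ y) N T
  simp only [sum_dotProduct, smul_dotProduct, smul_eq_mul, ← add_assoc] at h hbound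
  rw [div_mul_eq_mul_div, div_le_iff₀ hC]
  calc α * (y ⬝ᵥ y) ≤ _ := h t y
    _ ≤ _ := hbound
    _ ≤ _ := by
      rw [mul_comm _ C, ← mul_assoc]
      gcongr
      exact mul_le_mul_of_nonneg_right (le_add_of_nonneg_right zero_le_one) (by positivity)

end PersistentExcitation

section LinearSystem

variable {R ι κ : Type*} [CommRing R] [Fintype ι] [DecidableEq ι]

noncomputable def charpolyGain (A : Matrix ι ι R) (B : Matrix ι κ R) (s : ℕ) : Matrix ι κ R :=
  ∑ k ∈ Ico (s + 1) (Fintype.card ι + 1), A.charpoly.coeff k • (A ^ (k - 1 - s) * B)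

variable {A : Matrix ι ι R} {B : Matrix ι κ R}

lemma vecMul_pow_mul_eq_zero_of_vecMul_charpolyGain [Nontrivial R] {y : ι → R}
    (h : ∀ s < Fintype.card ι, y ᵥ* charpolyGain A B s = 0) :
    ∀ j < Fintype.card ι, y ᵥ* (A ^ j * B) = 0 := by
  set n := Fintype.card ι
  have hmonic : A.charpoly.coeff n = 1 := by
    simpa [charpoly_natDegree_eq_dim] using (charpoly_monic A).coeff_natDegree
  intro j
  induction j using Nat.strong_induction_on with
  | _ j ih =>
    intro hj
    have hgain : y ᵥ* charpolyGain A B (n - 1 - j) = y ᵥ* (A ^ j * B) := by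
      rw [charpolyGain, vecMul_sum, sum_Ico_succ_top (by omega), hmonic, one_smul,
        show n - 1 - (n - 1 - j) = j by omega, add_eq_right]
      refine sum_eq_zero fun k hk => ?_
      have := mem_Ico.1 hk
      rw [vecMul_smul, ih _ (by omega) (by omega), smul_zero]
    rw [← hgain]
    exact h _ (by omega)

variable [Fintype κ] {u : ℕ → κ → R} {x : ℕ → ι → R}

lemma state_add_eq (hdyn : ∀ t, x (t + 1) = A *ᵥ x t + B *ᵥ u t) (t k : ℕ) :
    x (t + k) = A ^ k *ᵥ x t + ∑ i ∈ range k, (A ^ (k - 1 - i) * B) *ᵥ u (t + i) := by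
  induction k with
  | zero => simp
  | succ k ih =>
    rw [← add_assoc, hdyn, ih, mulVec_add, mulVec_mulVec, ← pow_succ', mulVec_sum, add_assoc,
      sum_range_succ, Nat.add_sub_cancel, Nat.sub_self, pow_zero, Matrix.one_mul]
    congr 2
    refine sum_congr rfl fun i hi => ?_
    rw [mulVec_mulVec, ← Matrix.mul_assoc, ← pow_succ']
    congr 3
    have := mem_range.1 hi
    omega

lemma sum_charpoly_coeff_smul_state [Nontrivial R]
    (hdyn : ∀ t, x (t + 1) = A *ᵥ x t + B *ᵥ u t) (t : ℕ) :
    ∑ k ∈ range (Fintype.card ι + 1), A.charpoly.coeff k • x (t + k) =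
      ∑ s ∈ range (Fintype.card ι), charpolyGain A B s *ᵥ u (t + s) := by
  have hcayley : ∑ k ∈ range (Fintype.card ι + 1), A.charpoly.coeff k • A ^ k = 0 := by
    rw [← Polynomial.aeval_eq_sum_range' (by rw [charpoly_natDegree_eq_dim]; omega),
      aeval_self_charpoly]
  simp only [state_add_eq hdyn t, smul_add, sum_add_distrib, ← smul_mulVec, ← sum_mulVec,
    hcayley, zero_mulVec, zero_add, smul_sum, charpolyGain]
  rw [sum_comm' (t' := range (Fintype.card ι)) (s' := fun s => Ico (s + 1) (Fintype.card ι + 1))]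
  · simp only [sum_mulVec]
  · intro k i
    simp only [mem_range, mem_Ico]
    omega

end LinearSystem

def blockRow {R ι κ : Type*} (G : ℕ → Matrix ι κ R) (p : ℕ) : Matrix ι (Fin p × κ) R :=
  of fun i q => G q.1 i q.2

lemma vecMul_blockRow_eq_zero_iff {R ι κ : Type*} [Semiring R] [Fintype ι]
    {G : ℕ → Matrix ι κ R} {p : ℕ} {y : ι → R} :
    y ᵥ* blockRow G p = 0 ↔ ∀ s < p, y ᵥ* G s = 0 := by
  simp only [funext_iff, Prod.forall, Fin.forall_iff, Pi.zero_apply]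
  rfl

lemma Qstack_add_pred {k d : ℕ} (w : ℕ → Fin d → ℝ) (t : ℕ) (q : Fin k × Fin d) :
    Qstack k w (t + (k - 1)) q = w (t + q.1) q.2 := by
  have := q.1.isLt
  rw [Qstack, if_pos (by omega)]
  congr 2
  omega

lemma blockRow_mulVec_Qstack {ι : Type*} {k d : ℕ} (G : ℕ → Matrix ι (Fin d) ℝ)
    (w : ℕ → Fin d → ℝ) (t : ℕ) :
    blockRow G k *ᵥ Qstack k w (t + (k - 1)) = ∑ s ∈ range k, G s *ᵥ w (t + s) := by
  ext i
  simp only [mulVec, dotProduct, Fintype.sum_prod_type, Qstack_add_pred, blockRow, of_apply,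
    Finset.sum_apply]
  exact Fin.sum_univ_eq_sum_range (fun s => ∑ j, G s i j * w (t + s) j) k

lemma injective_vecMul_of_rank_eq_card {m n K : Type*} [Fintype m] [Fintype n] [Field K]
    {M : Matrix m n K} (h : M.rank = Fintype.card m) : Function.Injective fun y => y ᵥ* M := by
  rw [vecMul_injective_iff, linearIndependent_iff_card_eq_finrank_span, ← h,
    rank_eq_finrank_span_row]
  rfl

lemma IsReachable.injective_vecMul_blockRow_charpolyGain {n m : ℕ}
    {A : Matrix (Fin n) (Fin n) ℝ} {B : Matrix (Fin n) (Fin m) ℝ} (hAB : IsReachable A B) :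
    Function.Injective fun y => y ᵥ* blockRow (charpolyGain A B) n := by
  -- the reachability matrix of `IsReachable` is `blockRow (fun j => A ^ j * B) n`
  have hreach : Function.Injective fun y => y ᵥ* blockRow (fun j => A ^ j * B) n :=
    injective_vecMul_of_rank_eq_card (hAB.trans (Fintype.card_fin n).symm)
  intro y z hyz
  have hgain : (y - z) ᵥ* blockRow (charpolyGain A B) n = 0 := by
    rw [sub_vecMul]
    exact sub_eq_zero.2 hyz
  have hpow : (y - z) ᵥ* blockRow (fun j => A ^ j * B) n = 0 := by
    rw [vecMul_blockRow_eq_zero_iff] at hgain ⊢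
    simpa only [Fintype.card_fin] using
      vecMul_pow_mul_eq_zero_of_vecMul_charpolyGain (A := A) (B := B) (y := y - z)
        (by simpa only [Fintype.card_fin] using hgain)
  exact sub_eq_zero.1 (hreach (hpow.trans (zero_vecMul _).symm))

theorem pe_state_sufficient_general {n m : ℕ} (A : Matrix (Fin n) (Fin n) ℝ)
    (B : Matrix (Fin n) (Fin m) ℝ) (hAB : IsReachable A B)
    (u : ℕ → Fin m → ℝ)
    (x : ℕ → Fin n → ℝ)
    (hdyn : ∀ t : ℕ, x (t + 1) = A.mulVec (x t) + B.mulVec (u t))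
    (hPEu : IsPE (Qstack n u)) :
    IsPE x := by
  have hfilter : (fun t => blockRow (charpolyGain A B) n *ᵥ Qstack n u (t + (n - 1))) =
      fun t => ∑ k ∈ range (n + 1), A.charpoly.coeff k • x (t + k) := by
    funext t
    rw [blockRow_mulVec_Qstack]
    simpa only [Fintype.card_fin] using (sum_charpoly_coeff_smul_state hdyn t).symm
  apply IsPE.of_fir A.charpoly.coeff n
  rw [← hfilter]
  exact (hPEu.mulVec _ hAB.injective_vecMul_blockRow_charpolyGain).comp_add (n - 1)

/-- sufficient condition for PE state trajectories (discrete time): if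
`Q^n(u)` is persistently exciting then the state trajectory is persistently exciting. -/
theorem pe_state_sufficient {n m : ℕ} (A : Matrix (Fin n) (Fin n) ℝ)
    (B : Matrix (Fin n) (Fin m) ℝ) (hA : IsSchur A) (hAB : IsReachable A B)
    (u : ℕ → Fin m → ℝ) (hu : ∃ M : ℝ, ∀ t, ‖u t‖ ≤ M)
    (x : ℕ → Fin n → ℝ) (x0 : Fin n → ℝ) (hx0 : x 0 = x0)
    (hdyn : ∀ t : ℕ, x (t + 1) = A.mulVec (x t) + B.mulVec (u t))
    (hPEu : IsPE (Qstack n u)) :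
    IsPE x :=
  pe_state_sufficient_general A B hAB u x hdyn hPEu
end
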